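/- Batch-selection bound for the second stop condition: let n' > 0, m' ≥ 0, n > 0 and p ∈ (0,1] with m'/n' ≥ p. Define, for x ≥ 0, the worst-case marginal proportion M(x) = m'/(n' + x) and the worst-case equivalence proportion E(x) = p·n/(n − x) for 0 ≤ x < n. Then the equation M(x) = E(x) has the unique solution x = N₂ = (m'·n − p·n'·n)/(m' + p·n), and this N₂ satisfies 0 ≤ N₂ < n whenever m' ≥ p·n' and m' ≥ 0, p > 0; moreover for all 0 ≤ x < N₂, M(x) > E(x). -/
import Mathlib


/-- Batch-selection bound for the second stop condition: with worst-case marginal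
proportion `M x = m'/(n'+x)` and worst-case equivalence proportion `E x = p·n/(n−x)`,
the equation `M x = E x` on `[0, n)` has the unique solution
`N₂ = (m'·n − p·n'·n)/(m' + p·n)`, which satisfies `0 ≤ N₂ < n`, and `M x > E x`
for all `0 ≤ x < N₂`. -/
theorem batch_second_stop_condition (n' m' n p : ℝ)
    (hn' : 0 < n') (hm' : 0 ≤ m') (hn : 0 < n) (hp : 0 < p) (hp1 : p ≤ 1)
    (hge : p * n' ≤ m')
    (N₂ : ℝ) (hN₂ : N₂ = (m' * n - p * n' * n) / (m' + p * n)) :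
    (0 ≤ N₂ ∧ N₂ < n) ∧
    (∀ x : ℝ, 0 ≤ x → x < n → (m' / (n' + x) = p * n / (n - x) ↔ x = N₂)) ∧
    (∀ x : ℝ, 0 ≤ x → x < N₂ → m' / (n' + x) > p * n / (n - x)) := by
  have hden : 0 < m' + p * n := by nlinarith
  have hN0 : 0 ≤ N₂ := by
    rw [hN₂]
    apply div_nonneg _ hden.le
    nlinarith
  have hNn : N₂ < n := by
    rw [hN₂, div_lt_iff₀ hden]
    nlinarith [mul_pos (mul_pos hp hn') hn, mul_pos (mul_pos hp hn) hn]
  refine ⟨⟨hN0, hNn⟩, ?_, ?_⟩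
  · intro x hx hxn
    have h1 : 0 < n' + x := by linarith
    have h2 : 0 < n - x := by linarith
    rw [div_eq_div_iff h1.ne' h2.ne', hN₂, eq_div_iff hden.ne']
    constructor <;> intro h <;> nlinarith
  · intro x hx hxN
    have h1 : 0 < n' + x := by linarith
    have h2 : 0 < n - x := by linarith
    rw [gt_iff_lt, div_lt_div_iff₀ h2 h1]
    have := hxN
    rw [hN₂, lt_div_iff₀ hden] at this
    nlinarith
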